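/- arXiv:2505.06360 — 8 statements merged into one kernel-verified Lean document; each statement's English description precedes it below -/
import Mathlib

section
/- Let S be a commutative semiring and let p be a proper ideal of S. Then p is a z-prime ideal (i.e., p is a z-ideal and for all z-ideals a, b of S, a·b ⊆ p implies a ⊆ p or b ⊆ p) if and only if p is a prime ideal that is also a z-ideal. -/
/-- An ideal `I` of a commutative semiring is a *z-ideal* if for every `x ∈ I`,
the intersection of all maximal ideals containing `x` is contained in `I`. -/
def IsZIdeal {S : Type*} [CommSemiring S] (I : Ideal S) : Prop :=
  ∀ x ∈ I, sInf {m : Ideal S | m.IsMaximal ∧ x ∈ m} ≤ I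

lemma M_zideal {S : Type*} [CommSemiring S] (x : S) :
    IsZIdeal (sInf {m : Ideal S | m.IsMaximal ∧ x ∈ m}) := by
  intro z hz
  refine le_sInf fun m hm => sInf_le ?_
  exact ⟨hm.1, (Ideal.mem_sInf.mp hz) hm⟩

theorem z_prime_iff_prime_z_ideal {S : Type*} [CommSemiring S] (p : Ideal S) (hp : p ≠ ⊤) :
    (IsZIdeal p ∧ ∀ a b : Ideal S, IsZIdeal a → IsZIdeal b → a * b ≤ p → a ≤ p ∨ b ≤ p) ↔
      (p.IsPrime ∧ IsZIdeal p) := by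
  constructor
  · rintro ⟨hz, hzp⟩
    refine ⟨⟨hp, ?_⟩, hz⟩
    intro x y hxy
    set Mx := sInf {m : Ideal S | m.IsMaximal ∧ x ∈ m} with hMx
    set My := sInf {m : Ideal S | m.IsMaximal ∧ y ∈ m} with hMy
    have hxMx : x ∈ Mx := Ideal.mem_sInf.mpr fun _ hm => hm.2
    have hyMy : y ∈ My := Ideal.mem_sInf.mpr fun _ hm => hm.2
    have hmul : Mx * My ≤ p := by
      refine le_trans ?_ (hz (x * y) hxy)
      refine le_sInf fun m hm => ?_
      have hprime : m.IsPrime := hm.1.isPrime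
      rcases hprime.mem_or_mem hm.2 with h | h
      · exact le_trans Ideal.mul_le_left (sInf_le ⟨hm.1, h⟩)
      · exact le_trans Ideal.mul_le_right (sInf_le ⟨hm.1, h⟩)
    rcases hzp Mx My (M_zideal x) (M_zideal y) hmul with h | h
    · exact Or.inl (h hxMx)
    · exact Or.inr (h hyMy)
  · rintro ⟨hprime, hz⟩
    refine ⟨hz, fun a b _ _ hab => ?_⟩
    by_cases ha : a ≤ p
    · exact Or.inl ha
    · refine Or.inr fun y hy => ?_
      obtain ⟨x, hxa, hxp⟩ := SetLike.not_le_iff_exists.mp ha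
      have : x * y ∈ p := hab (Ideal.mul_mem_mul hxa hy)
      rcases hprime.mem_or_mem this with h | h
      · exact absurd h hxp
      · exact h
end

section
/- Let S be a commutative semiring, let 𝔭 be a z-ideal of S, and let 𝔞 be any ideal of S. If 𝔞² ⊆ 𝔭, then 𝔞 ⊆ 𝔭. (In particular, every proper z-ideal is z-semiprime.) -/
/-- Maximal ideals are prime, so `x ^ n` and `x` lie in the same maximal ideals. -/
theorem IsZIdeal.isRadical {S : Type*} [CommSemiring S] {I : Ideal S} (hI : IsZIdeal I) :
    I.IsRadical := by
  rintro x ⟨n, hxn⟩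
  refine hI _ hxn (Ideal.mem_sInf.2 ?_)
  rintro m ⟨hm, hxnm⟩
  exact hm.isPrime.mem_of_pow_mem n hxnm

theorem zIdeal_semiprime {S : Type*} [CommSemiring S] (p : Ideal S) (hp : IsZIdeal p)
    (a : Ideal S) (h : a * a ≤ p) : a ≤ p :=
  calc a ≤ (a * a).radical := by rw [Ideal.radical_mul, inf_idem]; exact Ideal.le_radical
    _ ≤ p := hp.isRadical.radical_le_iff.2 h
end

section
/- Let S be a commutative semiring and 𝔞 an ideal of S. Then the z-radical of 𝔞, defined as the intersection of all prime z-ideals of S containing 𝔞, is itself a z-ideal of S and contains 𝔞. -/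
/-- The *z-radical* of an ideal: the intersection of all prime z-ideals containing it. -/
def zRadical {S : Type*} [CommSemiring S] (a : Ideal S) : Ideal S :=
  sInf {p : Ideal S | p.IsPrime ∧ IsZIdeal p ∧ a ≤ p}

theorem IsZIdeal.sInf {S : Type*} [CommSemiring S] {s : Set (Ideal S)}
    (hs : ∀ I ∈ s, IsZIdeal I) : IsZIdeal (sInf s) := fun x hx =>
  le_sInf fun I hI => hs I hI x (Ideal.mem_sInf.mp hx hI)

theorem le_zRadical {S : Type*} [CommSemiring S] (a : Ideal S) : a ≤ zRadical a :=
  le_sInf fun _ hp => hp.2.2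

theorem isZIdeal_zRadical {S : Type*} [CommSemiring S] (a : Ideal S) :
    IsZIdeal (zRadical a) :=
  IsZIdeal.sInf fun _ hp => hp.2.1

theorem zRadical_isZIdeal_and_le {S : Type*} [CommSemiring S] (a : Ideal S) :
    IsZIdeal (zRadical a) ∧ a ≤ zRadical a :=
  ⟨isZIdeal_zRadical a, le_zRadical a⟩
end

section
/- Let S be a commutative semiring and let 𝔞, 𝔟 be ideals of S. Then ᶻ√(𝔞·𝔟) = ᶻ√(𝔞 ∩ 𝔟) = ᶻ√𝔞 ∩ ᶻ√𝔟. -/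
/-! Since the z-radical is an intersection of prime ideals, both identities follow from
`a * b ≤ p ↔ a ⊓ b ≤ p ↔ a ≤ p ∨ b ≤ p` for prime `p`. -/

section
variable {S : Type*} [CommSemiring S] (a b : Ideal S)

theorem zRadical_mul : zRadical (a * b) = zRadical (a ⊓ b) := by
  unfold zRadical
  congr 1
  ext p
  exact and_congr_right fun hp => and_congr_right fun _ => by rw [hp.mul_le, hp.inf_le]

theorem setOf_isPrime_isZIdeal_inf_le :
    {p : Ideal S | p.IsPrime ∧ IsZIdeal p ∧ a ⊓ b ≤ p} =
      {p | p.IsPrime ∧ IsZIdeal p ∧ a ≤ p} ∪ {p | p.IsPrime ∧ IsZIdeal p ∧ b ≤ p} := by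
  ext p
  by_cases hp : p.IsPrime
  · simp [hp, hp.inf_le, and_or_left]
  · simp [hp]

theorem zRadical_inf : zRadical (a ⊓ b) = zRadical a ⊓ zRadical b := by
  rw [zRadical, setOf_isPrime_isZIdeal_inf_le, sInf_union, zRadical, zRadical]

end

theorem zRadical_mul_inf {S : Type*} [CommSemiring S] (a b : Ideal S) :
    zRadical (a * b) = zRadical (a ⊓ b) ∧ zRadical (a ⊓ b) = zRadical a ⊓ zRadical b :=
  ⟨zRadical_mul a b, zRadical_inf a b⟩
end

section
/- Let S be a commutative semiring and let 𝔭 be a proper z-ideal of S. Then 𝔭 is z-prime (for all z-ideals a, b, a·b ⊆ 𝔭 implies a ⊆ 𝔭 or b ⊆ 𝔭) if and only if 𝔭 is z-strongly irreducible (for all z-ideals a, b, a ∩ b ⊆ 𝔭 implies a ⊆ 𝔭 or b ⊆ 𝔭). -/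
/-! A z-ideal is radical, since a maximal ideal containing `x ^ n` contains `x`; and below a
radical ideal `a * b` and `a ⊓ b` are interchangeable, because both have radical
`radical a ⊓ radical b`. -/

namespace Ideal

variable {S : Type*} [CommSemiring S]

theorem IsRadical.mul_le_iff_inf_le {a b p : Ideal S} (hp : p.IsRadical) :
    a * b ≤ p ↔ a ⊓ b ≤ p := by
  refine ⟨fun h => ?_, mul_le_inf.trans⟩
  calc a ⊓ b ≤ a.radical ⊓ b.radical := inf_le_inf le_radical le_radical
    _ = (a * b).radical := (radical_mul a b).symm
    _ ≤ p := hp.radical_le_iff.mpr h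

end Ideal

theorem zPrime_iff_zStronglyIrreducible_general {S : Type*} [CommSemiring S] (p : Ideal S)
    (hpz : IsZIdeal p) :
    (∀ a b : Ideal S, IsZIdeal a → IsZIdeal b → a * b ≤ p → a ≤ p ∨ b ≤ p) ↔
      (∀ a b : Ideal S, IsZIdeal a → IsZIdeal b → a ⊓ b ≤ p → a ≤ p ∨ b ≤ p) := by
  simp only [hpz.isRadical.mul_le_iff_inf_le]

theorem zPrime_iff_zStronglyIrreducible {S : Type*} [CommSemiring S] (p : Ideal S)
    (hp : p ≠ ⊤) (hpz : IsZIdeal p) :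
    (∀ a b : Ideal S, IsZIdeal a → IsZIdeal b → a * b ≤ p → a ≤ p ∨ b ≤ p) ↔
      (∀ a b : Ideal S, IsZIdeal a → IsZIdeal b → a ⊓ b ≤ p → a ≤ p ∨ b ≤ p) :=
  zPrime_iff_zStronglyIrreducible_general p hpz
end

section
/- Let S be a commutative semiring and 𝔪 an ideal of S. Then 𝔪 is a z-maximal ideal (a proper z-ideal maximal among proper z-ideals) if and only if 𝔪 is a maximal ideal of S. -/
theorem Ideal.IsMaximal.isZIdeal {S : Type*} [CommSemiring S] {M : Ideal S} (hM : M.IsMaximal) :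
    IsZIdeal M :=
  fun _ hx => sInf_le ⟨hM, hx⟩

theorem zMaximal_iff_maximal {S : Type*} [CommSemiring S] (m : Ideal S) :
    (IsZIdeal m ∧ m ≠ ⊤ ∧ ∀ n : Ideal S, IsZIdeal n → n ≠ ⊤ → ¬ m < n) ↔ m.IsMaximal := by
  constructor
  · rintro ⟨-, hm, hzmax⟩
    obtain ⟨M, hM, hmM⟩ := m.exists_le_maximal hm
    rwa [eq_of_le_of_not_lt hmM (hzmax M hM.isZIdeal hM.ne_top)]
  · intro hm
    exact ⟨hm.isZIdeal, hm.ne_top, fun n _ hn hmn => hn (hm.1.2 n hmn)⟩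
end

section
/- Let S be a commutative semiring and 𝔞 an ideal of S. Then the z-closure of 𝔞 equals the z-closure of its radical: cz(𝔞) = cz(√𝔞), where cz(𝔟) denotes the intersection of all z-ideals of S containing 𝔟. -/
/-- The *z-closure* of an ideal: the intersection of all z-ideals containing it. -/
def zClosure {S : Type*} [CommSemiring S] (a : Ideal S) : Ideal S :=
  sInf {z : Ideal S | IsZIdeal z ∧ a ≤ z}

theorem zClosure_radical {S : Type*} [CommSemiring S] (a : Ideal S) :
    zClosure a = zClosure a.radical :=
  congrArg sInf <| Set.ext fun _ => and_congr_right fun hz => hz.isRadical.radical_le_iff.symm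
end

section
/- Let S be a commutative semiring and let 𝔭 be a z-ideal of S. If 𝔞 and 𝔟 are z-ideals of S with 𝔞·𝔟 ⊆ 𝔭, then 𝔞 ∩ 𝔟 ⊆ 𝔭. -/
/-! Maximal ideals are prime, so every maximal ideal containing `x ^ n` contains `x`;
hence a z-ideal is radical. A radical ideal containing `a * b` contains `a ⊓ b`,
since `(a ⊓ b) ^ 2 ≤ a * b`. -/

theorem Ideal.IsRadical.inf_le_of_mul_le {R : Type*} [CommSemiring R] {a b p : Ideal R}
    (hp : p.IsRadical) (h : a * b ≤ p) : a ⊓ b ≤ p :=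
  calc a ⊓ b ≤ a.radical ⊓ b.radical := inf_le_inf Ideal.le_radical Ideal.le_radical
    _ = (a * b).radical := (Ideal.radical_mul a b).symm
    _ ≤ p := hp.radical_le_iff.2 h

theorem zIdeal_mul_le_imp_inf_le_general {S : Type*} [CommSemiring S] (p : Ideal S) (hp : IsZIdeal p)
    (a b : Ideal S) (h : a * b ≤ p) : a ⊓ b ≤ p :=
  hp.isRadical.inf_le_of_mul_le h

theorem zIdeal_mul_le_imp_inf_le {S : Type*} [CommSemiring S] (p : Ideal S) (hp : IsZIdeal p)
    (a b : Ideal S) (ha : IsZIdeal a) (hb : IsZIdeal b) (h : a * b ≤ p) : a ⊓ b ≤ p :=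
  zIdeal_mul_le_imp_inf_le_general p hp a b h
end
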